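/- arXiv:2302.12642 — 5 statements merged into one kernel-verified Lean document; each statement's English description precedes it below -/
import Mathlib

section
/- Let η > 0, μ > 0, m ∈ ℕ, a ∈ ℝ, and let s > 0 satisfy s^η > |a|. Then ∫_0^∞ e^(-st) t^(ηm+μ-1) E^m_{η,μ}(a t^η) dt = m! · s^(η-μ) / (s^η − a)^(m+1), and in particular the integral converges absolutely. -/
open MeasureTheory Real

/-- The generalized Mittag-Leffler function
`E^m_{η,μ}(x) = ∑_{k=0}^∞ ((k+m)!/k!) x^k / Γ(ηk + ηm + μ)`. -/
noncomputable def mittagLefflerGen (m : ℕ) (η μ x : ℝ) : ℝ :=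
  ∑' k : ℕ, ((k + m).factorial : ℝ) / (k.factorial : ℝ) * x ^ k /
    Real.Gamma (η * k + η * m + μ)

/-!
Integrate the defining series term by term. With `p k = ηk + ηm + μ`, the `k`-th term of
`t^(ηm+μ-1) E^m_{η,μ}(a t^η)` is `(k+m)!/k! · a^k · t^(p k - 1) / Γ(p k)`, whose Laplace transform is
`(k+m)!/k! · a^k / s^(p k)` by the Gamma integral. The same computation with `|a|` gives a
convergent series because `|a| < s^η`, so the series converges in `L¹(0, ∞)` and the interchange is
legitimate. What remains is `s^(-ηm-μ) ∑ (k+m)!/k! (a/s^η)^k`, the `m`-th derivative of the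
geometric series, which equals `m! s^(-ηm-μ) / (1 - a/s^η)^(m+1)`.
-/

open Set Nat
open scoped ENNReal

namespace MeasureTheory

theorem integrable_tsum_of_summable_integral_norm {α E ι : Type*} [MeasurableSpace α]
    {μ : Measure α} [NormedAddCommGroup E] [CompleteSpace E] [Countable ι] {F : ι → α → E}
    (hF_int : ∀ i, Integrable (F i) μ) (hF_sum : Summable fun i ↦ ∫ a, ‖F i a‖ ∂μ) :
    Integrable (fun a ↦ ∑' i, F i a) μ := by
  set f : ι → α →₁[μ] E := fun i ↦ (hF_int i).toL1 (F i)
  have hf : ∑' i, ‖f i‖ₑ ≠ ∞ := by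
    rw [tsum_enorm_ne_top_iff_summable_norm]
    exact hF_sum.congr fun i ↦ (L1.norm_of_fun_eq_integral_norm (hF_int i)).symm
  have hfF : ∀ᵐ a ∂μ, ∀ i, f i a = F i a := ae_all_iff.2 fun i ↦ (hF_int i).coeFn_toL1
  refine (L1.integrable_coeFn (∑' i, f i)).congr ?_
  filter_upwards [Lp.coeFn_tsum hf, hfF] with a hsum hterm
  simp only [hsum, hterm]

end MeasureTheory

lemma integrableOn_rpow_sub_one_mul_exp_neg_mul {p s : ℝ} (hp : 0 < p) (hs : 0 < s) :
    IntegrableOn (fun t : ℝ ↦ t ^ (p - 1) * exp (-(s * t))) (Ioi 0) := by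
  simpa [neg_mul] using
    integrableOn_rpow_mul_exp_neg_mul_rpow (s := p - 1) (by linarith) one_pos hs

lemma integral_div_Gamma_mul_rpow_mul_exp_neg_mul {p s : ℝ} (c : ℝ) (hp : 0 < p) (hs : 0 < s) :
    ∫ t in Ioi (0 : ℝ), c / Gamma p * (t ^ (p - 1) * exp (-(s * t))) = c / s ^ p := by
  rw [integral_const_mul, integral_rpow_mul_exp_neg_mul_Ioi hp hs, one_div, inv_rpow hs.le]
  field_simp [(Gamma_pos_of_pos hp).ne']

theorem laplace_tsum_div_Gamma_mul_rpow {ι : Type*} [Countable ι] {p b : ι → ℝ} {s : ℝ}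
    (hp : ∀ i, 0 < p i) (hs : 0 < s) (hb : Summable fun i ↦ |b i| / s ^ p i) :
    IntegrableOn (fun t ↦ ∑' i, b i / Gamma (p i) * (t ^ (p i - 1) * exp (-(s * t)))) (Ioi 0) ∧
    HasSum (fun i ↦ b i / s ^ p i)
      (∫ t in Ioi 0, ∑' i, b i / Gamma (p i) * (t ^ (p i - 1) * exp (-(s * t)))) := by
  have hint (i : ι) := (integrableOn_rpow_sub_one_mul_exp_neg_mul (hp i) hs).const_mul
    (b i / Gamma (p i))
  have hnorm (i : ι) : ∫ t in Ioi 0, ‖b i / Gamma (p i) * (t ^ (p i - 1) * exp (-(s * t)))‖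
      = |b i| / s ^ p i := by
    rw [← integral_div_Gamma_mul_rpow_mul_exp_neg_mul |b i| (hp i) hs]
    refine setIntegral_congr_fun measurableSet_Ioi fun t (ht : 0 < t) ↦ ?_
    have hker : 0 ≤ t ^ (p i - 1) * exp (-(s * t)) := by positivity
    rw [norm_mul, norm_div, norm_of_nonneg (Gamma_pos_of_pos (hp i)).le, norm_of_nonneg hker,
      norm_eq_abs]
  have hsum : Summable fun i ↦
      ∫ t in Ioi 0, ‖b i / Gamma (p i) * (t ^ (p i - 1) * exp (-(s * t)))‖ := by
    simpa only [hnorm] using hb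
  exact ⟨integrable_tsum_of_summable_integral_norm hint hsum,
    (hasSum_integral_of_summable_integral_norm hint hsum).congr_fun fun i ↦
      (integral_div_Gamma_mul_rpow_mul_exp_neg_mul (b i) (hp i) hs).symm⟩

lemma hasSum_factorial_add_div_factorial_mul_geometric (m : ℕ) {r : ℝ} (hr : |r| < 1) :
    HasSum (fun k : ℕ ↦ ((k + m)! : ℝ) / k ! * r ^ k) (m ! / (1 - r) ^ (m + 1)) := by
  have h := (hasSum_choose_mul_geometric_of_norm_lt_one m hr).mul_left (m ! : ℝ)
  rw [mul_one_div] at h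
  refine h.congr_fun fun k ↦ ?_
  rw [← Nat.add_choose_mul_factorial_mul_factorial k m]
  push_cast
  field_simp

lemma exp_mul_rpow_mul_mittagLefflerGen (m : ℕ) (η μ a s : ℝ) {t : ℝ} (ht : 0 < t) :
    exp (-s * t) * (t ^ (η * m + μ - 1) * mittagLefflerGen m η μ (a * t ^ η)) =
      ∑' k : ℕ, ((k + m)! / k ! * a ^ k) / Gamma (η * k + η * m + μ) *
        (t ^ (η * k + η * m + μ - 1) * exp (-(s * t))) := by
  rw [mittagLefflerGen, ← tsum_mul_left, ← tsum_mul_left]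
  refine tsum_congr fun k ↦ ?_
  have hpow : (a * t ^ η) ^ k = a ^ k * t ^ (η * k) := by
    rw [mul_pow, ← rpow_natCast (t ^ η), ← rpow_mul ht.le]
  have hexp : t ^ (η * k + η * m + μ - 1) = t ^ (η * m + μ - 1) * t ^ (η * k) := by
    rw [← rpow_add ht]
    ring_nf
  rw [hpow, hexp, neg_mul]
  ring

lemma hasSum_factorial_add_div_factorial_mul_div_rpow (m : ℕ) {η μ a s : ℝ} (hs : 0 < s)
    (hsa : |a| < s ^ η) :
    HasSum (fun k : ℕ ↦ (k + m)! / k ! * a ^ k / s ^ (η * k + η * m + μ))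
      (m ! * s ^ (η - μ) / (s ^ η - a) ^ (m + 1)) := by
  have hsη : 0 < s ^ η := rpow_pos_of_pos hs η
  have hr : |a / s ^ η| < 1 := by rwa [abs_div, abs_of_pos hsη, div_lt_one hsη]
  have h := (hasSum_factorial_add_div_factorial_mul_geometric m hr).div_const (s ^ (η * m + μ))
  have hsplit (k : ℕ) : s ^ (η * k + η * m + μ) = (s ^ η) ^ k * s ^ (η * m + μ) := by
    rw [add_assoc, rpow_add hs, rpow_mul hs.le, rpow_natCast]
  have hvalue : (m ! : ℝ) * s ^ (η - μ) / (s ^ η - a) ^ (m + 1) =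
      m ! / (1 - a / s ^ η) ^ (m + 1) / s ^ (η * m + μ) := by
    have hβ : s ^ (η * m + μ) = (s ^ η) ^ m * s ^ μ := by
      rw [rpow_add hs, rpow_mul hs.le, rpow_natCast]
    rw [one_sub_div hsη.ne', div_pow, rpow_sub hs, hβ]
    field_simp
    ring
  rw [hvalue]
  refine h.congr_fun fun k ↦ ?_
  rw [hsplit, div_pow]
  field_simp

/-- Laplace transform of `t ↦ t^(ηm+μ-1) E^m_{η,μ}(a t^η)`:
it is absolutely integrable and equals `m! s^(η-μ) / (s^η − a)^(m+1)` for `s^η > |a|`. -/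
theorem laplace_mittagLefflerGen (η μ : ℝ) (m : ℕ) (a s : ℝ) (hη : 0 < η) (hμ : 0 < μ)
    (hs : 0 < s) (hsa : |a| < s ^ η) :
    IntegrableOn
      (fun t : ℝ => Real.exp (-s * t) *
        (t ^ (η * m + μ - 1) * mittagLefflerGen m η μ (a * t ^ η))) (Set.Ioi 0) ∧
    ∫ t in Set.Ioi (0:ℝ),
        Real.exp (-s * t) * (t ^ (η * m + μ - 1) * mittagLefflerGen m η μ (a * t ^ η))
      = (m.factorial : ℝ) * s ^ (η - μ) / (s ^ η - a) ^ (m + 1) := by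
  have hp (k : ℕ) : 0 < η * k + η * m + μ := by positivity
  have hb : Summable fun k : ℕ ↦ |(k + m)! / k ! * a ^ k| / s ^ (η * k + η * m + μ) := by
    refine (hasSum_factorial_add_div_factorial_mul_div_rpow m (μ := μ) hs
      (by rwa [abs_abs] : |(|a|)| < s ^ η)).summable.congr fun k ↦ ?_
    rw [abs_mul, abs_pow, abs_of_nonneg (by positivity : (0 : ℝ) ≤ (k + m)! / k !)]
  obtain ⟨hint, hsum⟩ := laplace_tsum_div_Gamma_mul_rpow hp hs hb
  have heq := fun t (ht : t ∈ Ioi (0 : ℝ)) ↦ exp_mul_rpow_mul_mittagLefflerGen m η μ a s ht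
  refine ⟨hint.congr_fun (fun t ht ↦ (heq t ht).symm) measurableSet_Ioi, ?_⟩
  rw [setIntegral_congr_fun measurableSet_Ioi heq]
  exact hsum.unique (hasSum_factorial_add_div_factorial_mul_div_rpow m hs hsa)
end

section
/- Let ν > 0, β > 0, a ∈ ℝ, and let s > 0 satisfy s^ν > |a|. Then ∫_0^∞ e^(-st) t^(β-1) E_{ν,β}(a t^ν) dt = s^(ν-β) / (s^ν − a), and in particular the integral converges absolutely. -/
/-!
On `t > 0` we have `t^(β-1) E_{ν,β}(a t^ν) = ∑ₖ aᵏ t^(νk+β-1) / Γ(νk+β)`, and each term has Laplace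
transform `aᵏ s^(-(νk+β))` by the Gamma integral. For `|a| < s^ν` these transforms, even with
`|a|` in place of `a`, form a convergent geometric series, so the series may be integrated term by
term (Fubini–Tonelli for sums), giving `s^(-β) ∑ₖ (a s^(-ν))ᵏ = s^(ν-β) / (s^ν - a)`.
-/

open MeasureTheory Real

/-- The two-parameter Mittag-Leffler function `E_{α,β}(x) = ∑_{k=0}^∞ x^k / Γ(αk + β)`. -/
noncomputable def mittagLeffler (α β x : ℝ) : ℝ :=
  ∑' k : ℕ, x ^ k / Real.Gamma (α * k + β)

section TermwiseIntegration

variable {α ι E : Type*} [MeasurableSpace α] {μ : Measure α} [Countable ι]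
  [NormedAddCommGroup E] [CompleteSpace E] [SecondCountableTopology E]
  [MeasurableSpace E] [BorelSpace E]

theorem MeasureTheory.integrable_tsum_of_summable_integral_norm_s9 {F : ι → α → E}
    (hF_int : ∀ i, Integrable (F i) μ) (hF_sum : Summable fun i ↦ ∫ a, ‖F i a‖ ∂μ) :
    Integrable (fun a ↦ ∑' i, F i a) μ := by
  refine ⟨(AEMeasurable.tsum fun i ↦ (hF_int i).aemeasurable).aestronglyMeasurable, ?_⟩
  calc ∫⁻ a, ‖∑' i, F i a‖ₑ ∂μ
      ≤ ∫⁻ a, ∑' i, ‖F i a‖ₑ ∂μ := lintegral_mono fun _ ↦ enorm_tsum_le_tsum_enorm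
    _ = ∑' i, ENNReal.ofReal (∫ a, ‖F i a‖ ∂μ) := by
        rw [lintegral_tsum fun i ↦ (hF_int i).aemeasurable.enorm]
        simp_rw [ofReal_integral_norm_eq_lintegral_enorm (hF_int _)]
    _ < ⊤ := by
        rw [← ENNReal.ofReal_tsum_of_nonneg (fun i ↦ integral_nonneg fun _ ↦ norm_nonneg _) hF_sum]
        exact ENNReal.ofReal_lt_top

end TermwiseIntegration

theorem Real.integrableOn_rpow_mul_exp_neg_mul {p s : ℝ} (hp : 0 < p) (hs : 0 < s) :
    IntegrableOn (fun t : ℝ ↦ t ^ (p - 1) * exp (-(s * t))) (Set.Ioi 0) := by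
  simpa [Real.rpow_one] using
    integrableOn_rpow_mul_exp_neg_mul_rpow (by linarith : -1 < p - 1) one_pos hs

theorem Real.laplace_tsum_rpow {ι : Type*} [Countable ι] {c p : ι → ℝ} {s : ℝ}
    (hp : ∀ i, 0 < p i) (hs : 0 < s)
    (hsum : Summable fun i ↦ |c i| * ((1 / s) ^ p i * Gamma (p i))) :
    IntegrableOn (fun t ↦ ∑' i, c i * (t ^ (p i - 1) * exp (-(s * t)))) (Set.Ioi 0) ∧
      HasSum (fun i ↦ c i * ((1 / s) ^ p i * Gamma (p i)))
        (∫ t in Set.Ioi 0, ∑' i, c i * (t ^ (p i - 1) * exp (-(s * t)))) := by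
  have h_int i : IntegrableOn (fun t ↦ c i * (t ^ (p i - 1) * exp (-(s * t)))) (Set.Ioi 0) :=
    (integrableOn_rpow_mul_exp_neg_mul (hp i) hs).const_mul _
  have h_norm i : ∫ t in Set.Ioi 0, ‖c i * (t ^ (p i - 1) * exp (-(s * t)))‖
      = |c i| * ((1 / s) ^ p i * Gamma (p i)) := by
    rw [← integral_rpow_mul_exp_neg_mul_Ioi (hp i) hs, ← integral_const_mul]
    refine setIntegral_congr_fun measurableSet_Ioi fun t (ht : 0 < t) ↦ ?_
    rw [norm_mul, Real.norm_eq_abs, Real.norm_of_nonneg (by positivity)]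
  have h_sum := hsum.congr fun i ↦ (h_norm i).symm
  refine ⟨integrable_tsum_of_summable_integral_norm_s9 h_int h_sum, ?_⟩
  have h_val i : ∫ t in Set.Ioi 0, c i * (t ^ (p i - 1) * exp (-(s * t)))
      = c i * ((1 / s) ^ p i * Gamma (p i)) := by
    rw [integral_const_mul, integral_rpow_mul_exp_neg_mul_Ioi (hp i) hs]
  simpa only [h_val] using hasSum_integral_of_summable_integral_norm h_int h_sum

theorem Real.hasSum_pow_mul_one_div_rpow {ν β a s : ℝ} (hs : 0 < s) (hsa : |a| < s ^ ν) :
    HasSum (fun k : ℕ ↦ a ^ k * (1 / s) ^ (ν * k + β)) (s ^ (ν - β) / (s ^ ν - a)) := by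
  have hsν : 0 < s ^ ν := rpow_pos_of_pos hs ν
  have h_ratio : |a * (1 / s) ^ ν| < 1 := by
    rw [one_div, inv_rpow hs.le, abs_mul, abs_inv, abs_of_pos hsν, ← div_eq_mul_inv]
    exact (div_lt_one hsν).2 hsa
  have h_term (k : ℕ) : a ^ k * (1 / s) ^ (ν * k + β) = (1 / s) ^ β * (a * (1 / s) ^ ν) ^ k := by
    rw [rpow_add (by positivity), rpow_mul (by positivity), rpow_natCast, mul_pow]
    ring
  have h_sum : (1 / s) ^ β * (1 - a * (1 / s) ^ ν)⁻¹ = s ^ (ν - β) / (s ^ ν - a) := by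
    have : s ^ ν - a ≠ 0 := by linarith [le_abs_self a]
    rw [one_div, inv_rpow hs.le, inv_rpow hs.le, rpow_sub hs]
    field_simp
  simpa only [h_term, h_sum] using (hasSum_geometric_of_abs_lt_one h_ratio).mul_left ((1 / s) ^ β)

theorem exp_mul_rpow_mul_mittagLeffler_eq_tsum {ν β a s t : ℝ} (ht : 0 < t) :
    exp (-s * t) * (t ^ (β - 1) * mittagLeffler ν β (a * t ^ ν))
      = ∑' k : ℕ, a ^ k / Gamma (ν * k + β) * (t ^ (ν * k + β - 1) * exp (-(s * t))) := by
  rw [mittagLeffler, ← tsum_mul_left, ← tsum_mul_left]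
  congr 1 with k
  rw [mul_pow, ← rpow_natCast (t ^ ν), ← rpow_mul ht.le,
    show ν * k + β - 1 = β - 1 + ν * k by ring, rpow_add ht, neg_mul]
  ring

/-- Laplace transform of `t ↦ t^(β-1) E_{ν,β}(a t^ν)`:
it is absolutely integrable and equals `s^(ν-β) / (s^ν − a)` for `s^ν > |a|`. -/
theorem laplace_mittagLeffler_two_param (ν β a s : ℝ) (hν : 0 < ν) (hβ : 0 < β)
    (hs : 0 < s) (hsa : |a| < s ^ ν) :
    IntegrableOn
      (fun t : ℝ => Real.exp (-s * t) * (t ^ (β - 1) * mittagLeffler ν β (a * t ^ ν)))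
      (Set.Ioi 0) ∧
    ∫ t in Set.Ioi (0:ℝ), Real.exp (-s * t) * (t ^ (β - 1) * mittagLeffler ν β (a * t ^ ν))
      = s ^ (ν - β) / (s ^ ν - a) := by
  have hp (k : ℕ) : 0 < ν * k + β := by positivity
  have h_coeff (b : ℝ) (k : ℕ) :
      b ^ k / Gamma (ν * k + β) * ((1 / s) ^ (ν * k + β) * Gamma (ν * k + β))
        = b ^ k * (1 / s) ^ (ν * k + β) := by
    field_simp [(Gamma_pos_of_pos (hp k)).ne']
  have h_abs (k : ℕ) : |a ^ k / Gamma (ν * k + β)| = |a| ^ k / Gamma (ν * k + β) := by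
    rw [abs_div, abs_pow, abs_of_pos (Gamma_pos_of_pos (hp k))]
  have h_summable :=
    (hasSum_pow_mul_one_div_rpow (a := |a|) (β := β) hs (by rwa [abs_abs])).summable
  simp_rw [← h_coeff, ← h_abs] at h_summable
  obtain ⟨h_int, h_hasSum⟩ := laplace_tsum_rpow hp hs h_summable
  have h_eq := fun t (ht : t ∈ Set.Ioi (0 : ℝ)) ↦
    exp_mul_rpow_mul_mittagLeffler_eq_tsum (ν := ν) (β := β) (a := a) (s := s) ht
  refine ⟨h_int.congr_fun (fun t ht ↦ (h_eq t ht).symm) measurableSet_Ioi, ?_⟩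
  rw [setIntegral_congr_fun measurableSet_Ioi h_eq]
  simp_rw [h_coeff] at h_hasSum
  exact h_hasSum.unique (hasSum_pow_mul_one_div_rpow hs hsa)
end

section
/- Let β > 0 and let s be real with s + β < 1. Let f : (0,∞) → ℝ be measurable such that (x,t) ↦ x^(s-1) (x-t)^(β-1) |f(t)| is integrable on the region {0 < t < x}. Then ∫_0^∞ x^(s-1) [ (1/Γ(β)) ∫_0^x (x-t)^(β-1) f(t) dt ] dx = ( Γ(1−s−β) / Γ(1−s) ) · ∫_0^∞ t^(s+β-1) f(t) dt. -/
open MeasureTheory Real Set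

/-!
Swapping the order of integration over the triangle `0 < t < x` (Fubini) turns the left side
into `Γ(β)⁻¹ ∫_0^∞ f(t) ∫_t^∞ x^(s-1) (x-t)^(β-1) dx dt`. The substitution `x = t/u` maps
`0 < u < 1` onto `x > t` and turns the inner integral into
`t^(s+β-1) B(1-s-β, β) = t^(s+β-1) Γ(1-s-β) Γ(β) / Γ(1-s)`; the factor `Γ(β)` cancels the
normalisation of the fractional integral.
-/

theorem integral_Ioo_rpow_mul_one_sub_rpow {a b : ℝ} (ha : 0 < a) (hb : 0 < b) :
    ∫ x in Ioo (0:ℝ) 1, x ^ (a - 1) * (1 - x) ^ (b - 1) = Gamma a * Gamma b / Gamma (a + b) := by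
  have hcast : ∀ x ∈ Ioo (0:ℝ) 1, (x : ℂ) ^ ((a : ℂ) - 1) * (1 - (x : ℂ)) ^ ((b : ℂ) - 1)
      = ((x ^ (a - 1) * (1 - x) ^ (b - 1) : ℝ) : ℂ) := fun x ⟨hx0, hx1⟩ => by
    rw [Complex.ofReal_mul, Complex.ofReal_cpow hx0.le, Complex.ofReal_cpow (by linarith)]
    push_cast
    rfl
  have hB : Complex.betaIntegral a b
      = ((∫ x in Ioo (0:ℝ) 1, x ^ (a - 1) * (1 - x) ^ (b - 1) : ℝ) : ℂ) := by
    rw [Complex.betaIntegral, intervalIntegral.integral_of_le zero_le_one,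
      integral_Ioc_eq_integral_Ioo, setIntegral_congr_fun measurableSet_Ioo hcast]
    exact integral_ofReal
  have hΓ := Complex.Gamma_mul_Gamma_eq_betaIntegral (s := a) (t := b)
    (by simpa using ha) (by simpa using hb)
  rw [hB, ← Complex.ofReal_add, Complex.Gamma_ofReal, Complex.Gamma_ofReal,
    Complex.Gamma_ofReal] at hΓ
  rw [eq_div_iff (Gamma_pos_of_pos (add_pos ha hb)).ne', mul_comm]
  exact_mod_cast hΓ.symm

theorem image_const_div_Ioo_zero_one {t : ℝ} (ht : 0 < t) : (t / ·) '' Ioo 0 1 = Ioi t := by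
  ext x
  constructor
  · rintro ⟨u, ⟨hu0, hu1⟩, rfl⟩
    exact (lt_div_iff₀ hu0).2 (by nlinarith)
  · intro hx
    have hx0 : 0 < x := ht.trans hx
    exact ⟨t / x, ⟨div_pos ht hx0, (div_lt_one hx0).2 hx⟩, div_div_cancel₀ ht.ne'⟩

theorem integral_Ioi_rpow_mul_sub_rpow {β s t : ℝ} (hβ : 0 < β) (hs : s + β < 1) (ht : 0 < t) :
    ∫ x in Ioi t, x ^ (s - 1) * (x - t) ^ (β - 1)
      = t ^ (s + β - 1) * (Gamma (1 - s - β) * Gamma β / Gamma (1 - s)) := by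
  have hderiv : ∀ u ∈ Ioo (0:ℝ) 1, HasDerivWithinAt (t / ·) (-t / u ^ 2) (Ioo 0 1) u :=
    fun u hu => by simpa [div_eq_mul_inv, neg_div, mul_comm] using
      ((hasDerivAt_inv hu.1.ne').const_mul t).hasDerivWithinAt
  have hinj : InjOn (t / ·) (Ioo (0:ℝ) 1) := fun u _ v _ h =>
    inv_injective (mul_left_cancel₀ ht.ne' (by simpa [div_eq_mul_inv] using h))
  have hintegrand : ∀ u ∈ Ioo (0:ℝ) 1,
      |-t / u ^ 2| • ((t / u) ^ (s - 1) * (t / u - t) ^ (β - 1))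
        = t ^ (s + β - 1) * (u ^ (1 - s - β - 1) * (1 - u) ^ (β - 1)) := fun u ⟨hu0, hu1⟩ => by
    have h1u : 0 < 1 - u := by linarith
    rw [smul_eq_mul, abs_div, abs_neg, abs_of_pos ht, abs_of_pos (by positivity),
      show t / u - t = t * (1 - u) / u by field_simp, div_rpow ht.le hu0.le,
      div_rpow (by positivity) hu0.le, mul_rpow ht.le h1u.le, ← rpow_natCast,
      show (1:ℝ) - s - β - 1 = -(s - 1) + (-(β - 1) + -(2:ℕ)) by push_cast; ring,
      rpow_add hu0, rpow_add hu0, rpow_neg hu0.le, rpow_neg hu0.le, rpow_neg hu0.le,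
      show s + β - 1 = (s - 1) + (β - 1) + 1 by ring, rpow_add ht, rpow_add ht, rpow_one]
    field_simp
  rw [← image_const_div_Ioo_zero_one ht,
    integral_image_eq_integral_abs_deriv_smul measurableSet_Ioo hderiv hinj,
    setIntegral_congr_fun measurableSet_Ioo hintegrand, integral_const_mul,
    integral_Ioo_rpow_mul_one_sub_rpow (by linarith) hβ, sub_add_cancel]

section Triangle

variable {E : Type*} [NormedAddCommGroup E] [NormedSpace ℝ E]
  {μ ν : Measure ℝ} [SFinite μ] [SFinite ν] {a : ℝ}

theorem integral_Ioi_integral_Ioo_swap {F : ℝ × ℝ → E}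
    (hF : IntegrableOn F {p | a < p.2 ∧ p.2 < p.1} (μ.prod ν)) :
    ∫ x in Ioi a, ∫ t in Ioo a x, F (x, t) ∂ν ∂μ
      = ∫ t in Ioi a, ∫ x in Ioi t, F (x, t) ∂μ ∂ν := by
  set S : Set (ℝ × ℝ) := {p | a < p.2 ∧ p.2 < p.1}
  have hS : MeasurableSet S := by measurability
  have hsection_fst : ∀ x, ∫ t, S.indicator F (x, t) ∂ν
      = (Ioi a).indicator (fun x => ∫ t in Ioo a x, F (x, t) ∂ν) x := by
    intro x
    by_cases hx : a < x
    · rw [indicator_of_mem (mem_Ioi.2 hx), ← integral_indicator measurableSet_Ioo]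
      rfl
    · rw [indicator_of_notMem (notMem_Ioi.2 (not_lt.1 hx))]
      exact integral_eq_zero_of_ae
        (.of_forall fun t => indicator_of_notMem (fun h => hx (h.1.trans h.2)) _)
  have hsection_snd : ∀ t, ∫ x, S.indicator F (x, t) ∂μ
      = (Ioi a).indicator (fun t => ∫ x in Ioi t, F (x, t) ∂μ) t := by
    intro t
    by_cases ht : a < t
    · rw [indicator_of_mem (mem_Ioi.2 ht), ← integral_indicator measurableSet_Ioi]
      congr 1 with x
      simp only [indicator_apply, S, mem_ofPred_eq, mem_Ioi, ht, true_and]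
    · rw [indicator_of_notMem (notMem_Ioi.2 (not_lt.1 ht))]
      exact integral_eq_zero_of_ae (.of_forall fun x => indicator_of_notMem (fun h => ht h.1) _)
  calc ∫ x in Ioi a, ∫ t in Ioo a x, F (x, t) ∂ν ∂μ
      = ∫ x, ∫ t, S.indicator F (x, t) ∂ν ∂μ := by
        simp_rw [hsection_fst, integral_indicator measurableSet_Ioi]
    _ = ∫ t, ∫ x, S.indicator F (x, t) ∂μ ∂ν :=
        integral_integral_swap ((integrable_indicator_iff hS).2 hF)
    _ = ∫ t in Ioi a, ∫ x in Ioi t, F (x, t) ∂μ ∂ν := by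
        simp_rw [hsection_snd, integral_indicator measurableSet_Ioi]

end Triangle

/-- Mellin transform of the Riemann–Liouville fractional integral:
`M[I^β f](s) = (Γ(1−s−β)/Γ(1−s)) M[f](s+β)` for `s + β < 1`. -/
theorem mellin_rl_integral (β s : ℝ) (hβ : 0 < β) (hs : s + β < 1) (f : ℝ → ℝ)
    (hf : Measurable f)
    (hker : IntegrableOn
      (fun p : ℝ × ℝ => p.1 ^ (s - 1) * (p.1 - p.2) ^ (β - 1) * |f p.2|)
      {p : ℝ × ℝ | 0 < p.2 ∧ p.2 < p.1}) :
    ∫ x in Set.Ioi (0:ℝ),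
        x ^ (s - 1) * ((1 / Real.Gamma β) * ∫ t in (0:ℝ)..x, (x - t) ^ (β - 1) * f t)
      = (Real.Gamma (1 - s - β) / Real.Gamma (1 - s)) *
        ∫ t in Set.Ioi (0:ℝ), t ^ (s + β - 1) * f t := by
  set F : ℝ × ℝ → ℝ := fun p => p.1 ^ (s - 1) * (p.1 - p.2) ^ (β - 1) * f p.2
  have hF : IntegrableOn F {p : ℝ × ℝ | 0 < p.2 ∧ p.2 < p.1} (volume.prod volume) := by
    rw [← Measure.volume_eq_prod]
    refine (integrable_norm_iff (by fun_prop)).1 (hker.congr_fun (fun p ⟨hp2, hp⟩ => ?_) ?_)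
    · simp only [F, norm_mul, norm_eq_abs, abs_of_nonneg (rpow_nonneg (hp2.trans hp).le _),
        abs_of_nonneg (rpow_nonneg (sub_pos.2 hp).le _)]
    · measurability
  have hΓβ : Gamma β ≠ 0 := (Gamma_pos_of_pos hβ).ne'
  have hΓs : Gamma (1 - s) ≠ 0 := (Gamma_pos_of_pos (by linarith)).ne'
  calc _ = (Gamma β)⁻¹ * ∫ x in Ioi 0, ∫ t in Ioo 0 x, F (x, t) := by
        rw [← integral_const_mul]
        refine setIntegral_congr_fun measurableSet_Ioi fun x hx => ?_
        rw [intervalIntegral.integral_of_le (le_of_lt hx), integral_Ioc_eq_integral_Ioo,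
          ← integral_const_mul, ← integral_const_mul, ← integral_const_mul]
        simp only [F, one_div, mul_assoc, mul_left_comm]
    _ = (Gamma β)⁻¹ * ∫ t in Ioi 0, ∫ x in Ioi t, F (x, t) := by
        rw [integral_Ioi_integral_Ioo_swap hF]
    _ = (Gamma β)⁻¹ * ∫ t in Ioi 0,
          (Gamma (1 - s - β) * Gamma β / Gamma (1 - s)) * (t ^ (s + β - 1) * f t) := by
        refine congrArg _ (setIntegral_congr_fun measurableSet_Ioi fun t ht => ?_)
        simp only [F]
        rw [integral_mul_const, integral_Ioi_rpow_mul_sub_rpow hβ hs ht]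
        ring
    _ = _ := by
        rw [integral_const_mul]
        field_simp
end

section
/- Let 0 < β < 1 and let s < 1 be real. Let f : (0,∞) → ℝ be continuously differentiable and suppose: the boundary terms vanish, i.e. x^(s-β) f(x) → 0 as x → 0⁺ and as x → ∞; t ↦ t^(s-β-1) f(t) and t ↦ t^(s-β) f'(t) are absolutely integrable on (0,∞); and (x,t) ↦ x^(s-1) (x-t)^(-β) |f'(t)| is integrable on {0 < t < x}. Then ∫_0^∞ x^(s-1) [ (1/Γ(1-β)) ∫_0^x (x-t)^(-β) f'(t) dt ] dx = ( Γ(1−s+β) / Γ(1−s) ) · ∫_0^∞ t^(s-β-1) f(t) dt. -/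
open MeasureTheory Real Filter Set

lemma measurable_indicator_of_continuousOn {g : ℝ → ℝ} {U : Set ℝ} (hU : IsOpen U)
    (hg : ContinuousOn g U) : Measurable (U.indicator g) := by
  apply measurable_of_isOpen
  intro t ht
  obtain ⟨u, u_open, hu⟩ : ∃ u : Set ℝ, IsOpen u ∧ g ⁻¹' t ∩ U = u ∩ U :=
    _root_.continuousOn_iff'.1 hg t ht
  classical
  have : U.indicator g = U.piecewise g (fun _ => 0) := by
    ext x; by_cases hx : x ∈ U <;> simp [Set.indicator, Set.piecewise, hx]
  rw [this, Set.piecewise_preimage, Set.ite, hu]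
  exact (u_open.measurableSet.inter hU.measurableSet).union
    ((measurable_const ht.measurableSet).diff hU.measurableSet)

lemma real_beta {a b : ℝ} (ha : 0 < a) (hb : 0 < b) :
    ∫ x in (0:ℝ)..1, x ^ (a - 1) * (1 - x) ^ (b - 1)
      = Real.Gamma a * Real.Gamma b / Real.Gamma (a + b) := by
  have h := Complex.Gamma_mul_Gamma_eq_betaIntegral (s := (a:ℂ)) (t := (b:ℂ))
    (by simpa using ha) (by simpa using hb)
  have hβ : Complex.betaIntegral (a:ℂ) (b:ℂ)
      = ((∫ x in (0:ℝ)..1, x ^ (a - 1) * (1 - x) ^ (b - 1) : ℝ) : ℂ) := by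
    rw [Complex.betaIntegral, ← intervalIntegral.integral_ofReal]
    apply intervalIntegral.integral_congr
    intro x hx
    rw [Set.uIcc_of_le (by norm_num : (0:ℝ) ≤ 1)] at hx
    push_cast
    rw [Complex.ofReal_cpow hx.1, Complex.ofReal_cpow (by linarith [hx.2])]
    push_cast
    ring
  have hΓ : Complex.Gamma ((a:ℂ) + b) ≠ 0 := by
    apply Complex.Gamma_ne_zero
    intro m
    rw [← Complex.ofReal_natCast, ← Complex.ofReal_add, ← Complex.ofReal_neg]
    intro hc
    have := Complex.ofReal_injective hc
    have : (0:ℝ) ≤ (m:ℝ) := Nat.cast_nonneg m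
    nlinarith [Complex.ofReal_injective hc]
  have := h
  rw [hβ] at this
  have hval : ((∫ x in (0:ℝ)..1, x ^ (a - 1) * (1 - x) ^ (b - 1) : ℝ) : ℂ)
      = Complex.Gamma a * Complex.Gamma b / Complex.Gamma ((a:ℂ) + b) := by
    rw [eq_div_iff hΓ]
    linear_combination -this
  rw [← Complex.ofReal_add, Complex.Gamma_ofReal, Complex.Gamma_ofReal, Complex.Gamma_ofReal]
    at hval
  exact_mod_cast hval

lemma beta_Ioi_one {a b : ℝ} (ha : 0 < a) (hb : 0 < b) :
    ∫ u in Set.Ioi (1:ℝ), u ^ (-(a + b)) * (u - 1) ^ (b - 1)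
      = ∫ x in (0:ℝ)..1, x ^ (a - 1) * (1 - x) ^ (b - 1) := by
  set k : ℝ → ℝ := fun u => u ^ (-(a + b)) * (u - 1) ^ (b - 1) with hk
  have hsub := MeasureTheory.integral_comp_rpow_Ioi ((Set.Ioi (1:ℝ)).indicator k)
    (p := -1) (by norm_num)
  have hrhs : (∫ y in Set.Ioi (0:ℝ), (Set.Ioi (1:ℝ)).indicator k y)
      = ∫ u in Set.Ioi (1:ℝ), k u := by
    rw [MeasureTheory.setIntegral_indicator measurableSet_Ioi]
    congr 1
    rw [Set.inter_eq_self_of_subset_right (Set.Ioi_subset_Ioi zero_le_one)]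
  have hlhs : (∫ x in Set.Ioi (0:ℝ), (|(-1:ℝ)| * x ^ ((-1:ℝ) - 1)) •
        (Set.Ioi (1:ℝ)).indicator k (x ^ (-1:ℝ)))
      = ∫ x in Set.Ioi (0:ℝ), (Set.Ioo (0:ℝ) 1).indicator
          (fun x => x ^ (a - 1) * (1 - x) ^ (b - 1)) x := by
    apply MeasureTheory.setIntegral_congr_fun measurableSet_Ioi
    intro x hx
    have hx0 : (0:ℝ) < x := hx
    dsimp only
    have hxinv : x ^ (-1:ℝ) = x⁻¹ := by rw [Real.rpow_neg_one]
    by_cases hx1 : x < 1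
    · have hmem : x⁻¹ ∈ Set.Ioi (1:ℝ) := by
        simp only [Set.mem_Ioi]
        exact (one_lt_inv₀ hx0).mpr hx1
      have h1x : 0 < 1 - x := by linarith
      rw [hxinv, Set.indicator_of_mem hmem, Set.indicator_of_mem (Set.mem_Ioo.mpr ⟨hx0, hx1⟩)]
      simp only [hk, smul_eq_mul]
      have e1 : (x⁻¹) ^ (-(a + b)) = x ^ (a + b) := by
        rw [Real.inv_rpow hx0.le, ← Real.rpow_neg hx0.le, neg_neg]
      have e2 : x⁻¹ - 1 = (1 - x) / x := by field_simp
      rw [e1, e2, Real.div_rpow h1x.le hx0.le]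
      have e3 : x ^ ((-1:ℝ) - 1) * x ^ (a + b) / x ^ (b - 1) = x ^ (a - 1) := by
        rw [← Real.rpow_add hx0, ← Real.rpow_sub hx0]
        ring_nf
      calc |(-1:ℝ)| * x ^ ((-1:ℝ) - 1) * (x ^ (a + b) * ((1 - x) ^ (b - 1) / x ^ (b - 1)))
          = x ^ ((-1:ℝ) - 1) * x ^ (a + b) / x ^ (b - 1) * (1 - x) ^ (b - 1) := by
            rw [abs_neg, abs_one]; ring
        _ = x ^ (a - 1) * (1 - x) ^ (b - 1) := by rw [e3]
    · have hmem : x⁻¹ ∉ Set.Ioi (1:ℝ) := by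
        simp only [Set.mem_Ioi, not_lt]
        exact inv_le_one_of_one_le₀ (not_lt.mp hx1)
      rw [hxinv, Set.indicator_of_notMem hmem,
        Set.indicator_of_notMem (by simp [Set.mem_Ioo, not_lt.mp hx1])]
      simp
  rw [hrhs, hlhs] at hsub
  rw [← hsub, MeasureTheory.integral_indicator measurableSet_Ioo,
    MeasureTheory.Measure.restrict_restrict measurableSet_Ioo,
    Set.inter_eq_self_of_subset_left (Set.Ioo_subset_Ioi_self),
    intervalIntegral.integral_of_le zero_le_one,
    ← MeasureTheory.integral_Ioc_eq_integral_Ioo]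

lemma beta_Ioi_t {β s t : ℝ} (ht : 0 < t) :
    ∫ x in Set.Ioi t, x ^ (s - 1) * (x - t) ^ (-β)
      = t ^ (s - β) * ∫ u in Set.Ioi (1:ℝ), u ^ (s - 1) * (u - 1) ^ (-β) := by
  have h := MeasureTheory.integral_comp_mul_left_Ioi
    (fun x => x ^ (s - 1) * (x - t) ^ (-β)) 1 ht
  rw [mul_one] at h
  have hcongr : (∫ u in Set.Ioi (1:ℝ), (t * u) ^ (s - 1) * (t * u - t) ^ (-β))
      = ∫ u in Set.Ioi (1:ℝ), (t ^ (s - 1) * t ^ (-β)) * (u ^ (s - 1) * (u - 1) ^ (-β)) := by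
    apply MeasureTheory.setIntegral_congr_fun measurableSet_Ioi
    intro u hu
    dsimp only
    have hu1 : (1:ℝ) < u := hu
    have hu0 : (0:ℝ) < u := by linarith
    have e1 : t * u - t = t * (u - 1) := by ring
    rw [e1, Real.mul_rpow ht.le hu0.le, Real.mul_rpow ht.le (by linarith : (0:ℝ) ≤ u - 1)]
    ring
  rw [hcongr, MeasureTheory.integral_const_mul] at h
  have := h.symm
  rw [smul_eq_mul] at this
  have h2 : ∫ x in Set.Ioi t, x ^ (s - 1) * (x - t) ^ (-β)
      = t * (t ^ (s - 1) * t ^ (-β) * ∫ u in Set.Ioi (1:ℝ), u ^ (s - 1) * (u - 1) ^ (-β)) := by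
    rw [← this]
    field_simp
  rw [h2, ← mul_assoc, ← mul_assoc]
  congr 1
  rw [show s - β = 1 + (s - 1) + -β by ring, Real.rpow_add ht, Real.rpow_add ht,
    Real.rpow_one]

lemma ibp_Ioi {β s : ℝ} {f f' : ℝ → ℝ}
    (hderiv : ∀ x ∈ Set.Ioi (0:ℝ), HasDerivAt f (f' x) x)
    (hzero : Tendsto (fun x : ℝ => x ^ (s - β) * f x) (nhdsWithin 0 (Set.Ioi 0)) (nhds 0))
    (hinfty : Tendsto (fun x : ℝ => x ^ (s - β) * f x) atTop (nhds 0))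
    (hfint : IntegrableOn (fun t : ℝ => t ^ (s - β - 1) * f t) (Set.Ioi 0))
    (hf'int : IntegrableOn (fun t : ℝ => t ^ (s - β) * f' t) (Set.Ioi 0)) :
    ∫ t in Set.Ioi (0:ℝ), t ^ (s - β) * f' t
      = (β - s) * ∫ t in Set.Ioi (0:ℝ), t ^ (s - β - 1) * f t := by
  set g : ℝ → ℝ := fun t => t ^ (s - β) * f t with hg
  set g' : ℝ → ℝ := fun t => (s - β) * (t ^ (s - β - 1) * f t) + t ^ (s - β) * f' t with hg'
  have hg'int : IntegrableOn g' (Set.Ioi 0) := (hfint.const_mul (s - β)).add hf'int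
  have hgderiv : ∀ t ∈ Set.Ioi (0:ℝ), HasDerivAt g (g' t) t := by
    intro t ht
    have h1 : HasDerivAt (fun t : ℝ => t ^ (s - β)) ((s - β) * t ^ (s - β - 1)) t :=
      Real.hasDerivAt_rpow_const (Or.inl (ne_of_gt ht))
    have := h1.fun_mul (hderiv t ht)
    refine this.congr_deriv ?_
    show _ = (s - β) * (t ^ (s - β - 1) * f t) + t ^ (s - β) * f' t
    ring
  -- sequence of sets
  set u : ℕ → Set ℝ := fun n => Set.Ioc ((n:ℝ)+1)⁻¹ ((n:ℝ)+1) with hu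
  have hn0 : ∀ n : ℕ, (0:ℝ) < ((n:ℝ)+1)⁻¹ := fun n => by positivity
  have hn1 : ∀ n : ℕ, ((n:ℝ)+1)⁻¹ ≤ ((n:ℝ)+1) := by
    intro n
    have h1 : (1:ℝ) ≤ (n:ℝ)+1 := by
      have := Nat.cast_nonneg (α := ℝ) n; linarith
    calc ((n:ℝ)+1)⁻¹ ≤ 1 := inv_le_one_of_one_le₀ h1
      _ ≤ (n:ℝ)+1 := h1
  have hmono : Monotone u := by
    intro n m hnm
    have hc : ((n:ℝ)+1) ≤ (m:ℝ)+1 := by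
      have := (Nat.cast_le (α := ℝ)).mpr hnm; linarith
    apply Set.Ioc_subset_Ioc
    · exact inv_anti₀ (by positivity) hc
    · exact hc
  have hunion : (⋃ n, u n) = Set.Ioi (0:ℝ) := by
    ext x
    simp only [Set.mem_iUnion, hu, Set.mem_Ioc, Set.mem_Ioi]
    constructor
    · rintro ⟨n, h1, _⟩; exact lt_trans (hn0 n) h1
    · intro hx
      obtain ⟨n, hn⟩ := exists_nat_gt (max x⁻¹ x)
      refine ⟨n, ?_, ?_⟩
      · have : x⁻¹ < (n:ℝ) + 1 := by
          calc x⁻¹ ≤ max x⁻¹ x := le_max_left _ _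
            _ < n := hn
            _ < n + 1 := by linarith
        calc ((n:ℝ)+1)⁻¹ < x⁻¹⁻¹ := by
              apply inv_strictAnti₀ (by positivity) this
          _ = x := inv_inv x
      · calc x ≤ max x⁻¹ x := le_max_right _ _
          _ ≤ (n:ℝ)+1 := by linarith
  have htendsto := MeasureTheory.tendsto_setIntegral_of_monotone
    (fun n => measurableSet_Ioc) hmono (by rw [hunion]; exact hg'int)
  rw [hunion] at htendsto
  -- compute each set integral via FTC
  have hval : ∀ n : ℕ, (∫ t in u n, g' t) = g ((n:ℝ)+1) - g (((n:ℝ)+1)⁻¹) := by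
    intro n
    have hsub : Set.uIcc (((n:ℝ)+1)⁻¹) ((n:ℝ)+1) ⊆ Set.Ioi 0 := by
      rw [Set.uIcc_of_le (hn1 n)]
      intro y hy
      exact lt_of_lt_of_le (hn0 n) hy.1
    have hii : IntervalIntegrable g' volume (((n:ℝ)+1)⁻¹) ((n:ℝ)+1) := by
      rw [intervalIntegrable_iff_integrableOn_Ioc_of_le (hn1 n)]
      exact hg'int.mono_set (fun y hy => lt_of_lt_of_le (hn0 n) (le_of_lt hy.1))
    have := intervalIntegral.integral_eq_sub_of_hasDerivAt
      (fun y hy => hgderiv y (hsub hy)) hii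
    rw [← this, intervalIntegral.integral_of_le (hn1 n)]
  -- limits
  have hlim : Tendsto (fun n : ℕ => g ((n:ℝ)+1) - g (((n:ℝ)+1)⁻¹)) atTop (nhds 0) := by
    have h1 : Tendsto (fun n : ℕ => ((n:ℝ)+1)) atTop atTop :=
      tendsto_atTop_add_const_right _ 1 tendsto_natCast_atTop_atTop
    have h2 : Tendsto (fun n : ℕ => ((n:ℝ)+1)⁻¹) atTop (nhdsWithin 0 (Set.Ioi 0)) := by
      rw [tendsto_nhdsWithin_iff]
      exact ⟨tendsto_inv_atTop_zero.comp h1, Eventually.of_forall fun n => hn0 n⟩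
    have := (hinfty.comp h1).sub (hzero.comp h2)
    simpa using this
  have key : (∫ t in Set.Ioi (0:ℝ), g' t) = 0 := by
    have : Tendsto (fun n : ℕ => ∫ t in u n, g' t) atTop (nhds 0) := by
      simp only [hval]; exact hlim
    exact tendsto_nhds_unique htendsto this
  have hsplit : (∫ t in Set.Ioi (0:ℝ), g' t)
      = (s - β) * (∫ t in Set.Ioi (0:ℝ), t ^ (s - β - 1) * f t)
        + ∫ t in Set.Ioi (0:ℝ), t ^ (s - β) * f' t := by
    rw [hg', MeasureTheory.integral_add (hfint.const_mul (s - β)) hf'int,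
      MeasureTheory.integral_const_mul]
  rw [key] at hsplit
  linarith [hsplit]

/-- Mellin transform of the Caputo fractional derivative:
`M[^C D^β f](s) = (Γ(1−s+β)/Γ(1−s)) M[f](s−β)` for `0 < β < 1`, `s < 1`, under vanishing
boundary terms and suitable integrability. -/
theorem mellin_caputo_derivative (β s : ℝ) (hβ0 : 0 < β) (hβ1 : β < 1) (hs : s < 1)
    (f f' : ℝ → ℝ)
    (hderiv : ∀ x ∈ Set.Ioi (0:ℝ), HasDerivAt f (f' x) x)
    (hf'cont : ContinuousOn f' (Set.Ioi 0))
    (hzero : Tendsto (fun x : ℝ => x ^ (s - β) * f x) (nhdsWithin 0 (Set.Ioi 0)) (nhds 0))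
    (hinfty : Tendsto (fun x : ℝ => x ^ (s - β) * f x) atTop (nhds 0))
    (hfint : IntegrableOn (fun t : ℝ => t ^ (s - β - 1) * f t) (Set.Ioi 0))
    (hf'int : IntegrableOn (fun t : ℝ => t ^ (s - β) * f' t) (Set.Ioi 0))
    (hker : IntegrableOn
      (fun p : ℝ × ℝ => p.1 ^ (s - 1) * (p.1 - p.2) ^ (-β) * |f' p.2|)
      {p : ℝ × ℝ | 0 < p.2 ∧ p.2 < p.1}) :
    ∫ x in Set.Ioi (0:ℝ),
        x ^ (s - 1) * ((1 / Real.Gamma (1 - β)) * ∫ t in (0:ℝ)..x, (x - t) ^ (-β) * f' t)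
      = (Real.Gamma (1 - s + β) / Real.Gamma (1 - s)) *
        ∫ t in Set.Ioi (0:ℝ), t ^ (s - β - 1) * f t := by
  have hS : MeasurableSet {p : ℝ × ℝ | 0 < p.2 ∧ p.2 < p.1} := by
    apply MeasurableSet.inter
    · exact measurableSet_lt measurable_const measurable_snd
    · exact measurableSet_lt measurable_snd measurable_fst
  set S := {p : ℝ × ℝ | 0 < p.2 ∧ p.2 < p.1} with hSdef
  by_cases hcase : s < β
  · -- main case
    set f2 : ℝ → ℝ := (Set.Ioi (0:ℝ)).indicator f' with hf2
    have hf2meas : Measurable f2 := measurable_indicator_of_continuousOn isOpen_Ioi hf'cont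
    set H : ℝ × ℝ → ℝ := fun p => p.1 ^ (s - 1) * (p.1 - p.2) ^ (-β) * f2 p.2 with hH
    set G : ℝ × ℝ → ℝ := S.indicator H with hG
    have hHmeas : Measurable H := by
      apply Measurable.mul
      · show Measurable fun p : ℝ × ℝ => p.1 ^ (s - 1) * (p.1 - p.2) ^ (-β)
        fun_prop
      · exact hf2meas.comp measurable_snd
    have hGmeas : Measurable G := hHmeas.indicator hS
    have hGint : Integrable G := by
      have hkerind : Integrable (S.indicator
          (fun p : ℝ × ℝ => p.1 ^ (s - 1) * (p.1 - p.2) ^ (-β) * |f' p.2|)) := by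
        rw [integrable_indicator_iff hS]
        exact hker
      apply Integrable.mono' hkerind hGmeas.aestronglyMeasurable
      apply Eventually.of_forall
      intro p
      by_cases hp : p ∈ S
      · rw [hG, Set.indicator_of_mem hp, Set.indicator_of_mem hp]
        have h2 : 0 < p.2 := hp.1
        have h12 : p.2 < p.1 := hp.2
        have h1 : (0:ℝ) ≤ p.1 := le_of_lt (lt_trans h2 h12)
        have hf2eq : f2 p.2 = f' p.2 := Set.indicator_of_mem h2 f'
        rw [hH]
        dsimp only
        rw [hf2eq, Real.norm_eq_abs, abs_mul, abs_mul,
          abs_of_nonneg (Real.rpow_nonneg h1 _),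
          abs_of_nonneg (Real.rpow_nonneg (by linarith : (0:ℝ) ≤ p.1 - p.2) _)]
      · rw [hG, Set.indicator_of_notMem hp, Set.indicator_of_notMem hp]
        simp
    -- step 1 : rewrite LHS
    have step1 : (∫ x in Set.Ioi (0:ℝ),
          x ^ (s - 1) * ((1 / Real.Gamma (1 - β)) * ∫ t in (0:ℝ)..x, (x - t) ^ (-β) * f' t))
        = (1 / Real.Gamma (1 - β)) * ∫ x in Set.Ioi (0:ℝ), (∫ t : ℝ, G (x, t)) := by
      rw [← MeasureTheory.integral_const_mul]
      apply MeasureTheory.setIntegral_congr_fun measurableSet_Ioi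
      intro x hx
      dsimp only
      have hx0 : (0:ℝ) < x := hx
      have hfun : (fun t => G (x, t))
          = (Set.Ioo (0:ℝ) x).indicator (fun t => x ^ (s - 1) * ((x - t) ^ (-β) * f' t)) := by
        funext t
        by_cases htm : t ∈ Set.Ioo (0:ℝ) x
        · have hmem : (x, t) ∈ S := ⟨htm.1, htm.2⟩
          rw [hG, Set.indicator_of_mem hmem, Set.indicator_of_mem htm, hH]
          dsimp only
          rw [show f2 t = f' t from Set.indicator_of_mem htm.1 f']
          ring
        · have hns : (x, t) ∉ S := by intro hc; exact htm ⟨hc.1, hc.2⟩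
          rw [hG, Set.indicator_of_notMem hns, Set.indicator_of_notMem htm]
      have hinner : (∫ t : ℝ, G (x, t))
          = x ^ (s - 1) * ∫ t in Set.Ioo (0:ℝ) x, (x - t) ^ (-β) * f' t := by
        rw [hfun, MeasureTheory.integral_indicator measurableSet_Ioo,
          MeasureTheory.integral_const_mul]
      rw [hinner, intervalIntegral.integral_of_le hx0.le,
        MeasureTheory.integral_Ioc_eq_integral_Ioo]
      ring
    -- step 2 : extend outer integral to ℝ
    have step2 : (∫ x in Set.Ioi (0:ℝ), (∫ t : ℝ, G (x, t))) = ∫ x : ℝ, (∫ t : ℝ, G (x, t)) := by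
      apply MeasureTheory.setIntegral_eq_integral_of_forall_compl_eq_zero
      intro x hx
      have : ∀ t : ℝ, G (x, t) = 0 := by
        intro t
        apply Set.indicator_of_notMem
        intro hmem
        exact hx (lt_trans hmem.1 hmem.2)
      simp [this]
    -- step 3 : Fubini
    have step3 : (∫ x : ℝ, (∫ t : ℝ, G (x, t))) = ∫ t : ℝ, (∫ x : ℝ, G (x, t)) := by
      apply MeasureTheory.integral_integral_swap
      rw [← Measure.volume_eq_prod]
      exact hGint
    -- the beta constant
    set B : ℝ := Real.Gamma (β - s) * Real.Gamma (1 - β) / Real.Gamma (1 - s) with hB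
    have hBval : (∫ u in Set.Ioi (1:ℝ), u ^ (s - 1) * (u - 1) ^ (-β)) = B := by
      have h1 := beta_Ioi_one (a := β - s) (b := 1 - β) (by linarith) (by linarith)
      have h2 := real_beta (a := β - s) (b := 1 - β) (by linarith) (by linarith)
      rw [show -((β - s) + (1 - β)) = s - 1 by ring, show (1 - β) - 1 = -β by ring] at h1
      rw [show (β - s) + (1 - β) = 1 - s by ring,
        show (1:ℝ) - β - 1 = -β by ring] at h2
      rw [h1, h2, hB]
    -- step 4 : evaluate inner integrals
    have step4 : (∫ t : ℝ, (∫ x : ℝ, G (x, t)))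
        = ∫ t in Set.Ioi (0:ℝ), B * (t ^ (s - β) * f' t) := by
      have hcompl : ∀ t : ℝ, t ∉ Set.Ioi (0:ℝ) → (∫ x : ℝ, G (x, t)) = 0 := by
        intro t ht
        have : ∀ x : ℝ, G (x, t) = 0 := by
          intro x
          apply Set.indicator_of_notMem
          intro hmem
          exact ht hmem.1
        simp [this]
      rw [← MeasureTheory.setIntegral_eq_integral_of_forall_compl_eq_zero hcompl]
      apply MeasureTheory.setIntegral_congr_fun measurableSet_Ioi
      intro t ht
      dsimp only
      have ht0 : (0:ℝ) < t := ht
      have hfun : (fun x => G (x, t))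
          = (Set.Ioi t).indicator (fun x => (x ^ (s - 1) * (x - t) ^ (-β)) * f' t) := by
        funext x
        by_cases hxm : x ∈ Set.Ioi t
        · have hmem : (x, t) ∈ S := ⟨ht0, hxm⟩
          rw [hG, Set.indicator_of_mem hmem, Set.indicator_of_mem hxm, hH]
          dsimp only
          rw [show f2 t = f' t from Set.indicator_of_mem ht0 f']
        · have hns : (x, t) ∉ S := by intro hc; exact hxm hc.2
          rw [hG, Set.indicator_of_notMem hns, Set.indicator_of_notMem hxm]
      rw [hfun, MeasureTheory.integral_indicator measurableSet_Ioi,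
        MeasureTheory.integral_mul_const, beta_Ioi_t ht0, hBval]
      ring
    have step5 : (∫ t in Set.Ioi (0:ℝ), B * (t ^ (s - β) * f' t))
        = B * ((β - s) * ∫ t in Set.Ioi (0:ℝ), t ^ (s - β - 1) * f t) := by
      rw [MeasureTheory.integral_const_mul, ibp_Ioi hderiv hzero hinfty hfint hf'int]
    have hΓβ : Real.Gamma (1 - β) ≠ 0 := ne_of_gt (Real.Gamma_pos_of_pos (by linarith))
    have hΓs : Real.Gamma (1 - s) ≠ 0 := ne_of_gt (Real.Gamma_pos_of_pos (by linarith))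
    have hβs : β - s ≠ 0 := ne_of_gt (by linarith)
    have hrec : Real.Gamma (1 - s + β) = (β - s) * Real.Gamma (β - s) := by
      rw [show 1 - s + β = (β - s) + 1 by ring, Real.Gamma_add_one hβs]
    rw [step1, step2, step3, step4, step5, hB, hrec]
    field_simp
  · -- degenerate case: β ≤ s forces f' ≡ 0 on (0,∞), then f ≡ 0
    have hβs : β ≤ s := not_lt.mp hcase
    have hf'zero : ∀ t ∈ Set.Ioi (0:ℝ), f' t = 0 := by
      have hkerind : Integrable (S.indicator
          (fun p : ℝ × ℝ => p.1 ^ (s - 1) * (p.1 - p.2) ^ (-β) * |f' p.2|)) := by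
        rw [integrable_indicator_iff hS]; exact hker
      rw [Measure.volume_eq_prod] at hkerind
      have hae := hkerind.prod_left_ae
      have hae2 : ∀ᵐ t : ℝ, ¬(0 < t ∧ f' t ≠ 0) := by
        filter_upwards [hae] with t hint
        rintro ⟨ht0, hft⟩
        have hfun : (fun x => S.indicator
              (fun p : ℝ × ℝ => p.1 ^ (s - 1) * (p.1 - p.2) ^ (-β) * |f' p.2|) (x, t))
            = (Set.Ioi t).indicator (fun x => (x ^ (s - 1) * (x - t) ^ (-β)) * |f' t|) := by
          funext x
          by_cases hxm : x ∈ Set.Ioi t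
          · rw [Set.indicator_of_mem (show (x, t) ∈ S from ⟨ht0, hxm⟩),
              Set.indicator_of_mem hxm]
          · rw [Set.indicator_of_notMem (show (x, t) ∉ S from fun hc => hxm hc.2),
              Set.indicator_of_notMem hxm]
        rw [hfun, integrable_indicator_iff measurableSet_Ioi] at hint
        have habs : |f' t| ≠ 0 := abs_ne_zero.mpr hft
        have hint2 : IntegrableOn (fun x => x ^ (s - 1) * (x - t) ^ (-β)) (Set.Ioi t) := by
          have h1 := hint.mul_const (|f' t|)⁻¹
          apply h1.congr
          apply Eventually.of_forall
          intro x
          field_simp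
        have hmono : IntegrableOn (fun x : ℝ => x ^ (s - 1 - β)) (Set.Ioi t) := by
          apply Integrable.mono' hint2
          · apply Measurable.aestronglyMeasurable
            fun_prop
          · rw [ae_restrict_iff' measurableSet_Ioi]
            apply Eventually.of_forall
            intro x hx
            have hxt : t < x := hx
            have hx0 : (0:ℝ) < x := lt_trans ht0 hxt
            rw [Real.norm_eq_abs, abs_of_nonneg (Real.rpow_nonneg hx0.le _)]
            have e1 : x ^ (s - 1 - β) = x ^ (s - 1) * x ^ (-β) := by
              rw [← Real.rpow_add hx0]; ring_nf
            rw [e1]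
            apply mul_le_mul_of_nonneg_left _ (Real.rpow_nonneg hx0.le _)
            exact Real.rpow_le_rpow_of_nonpos (by linarith) (by linarith) (by linarith)
        rw [integrableOn_Ioi_rpow_iff ht0] at hmono
        linarith
      intro t₀ ht₀
      by_contra hne
      have hcont : ContinuousAt f' t₀ := hf'cont.continuousAt (isOpen_Ioi.mem_nhds ht₀)
      have hev : ∀ᶠ y in nhds t₀, 0 < y ∧ f' y ≠ 0 :=
        ((isOpen_Ioi.eventually_mem ht₀).and (hcont.eventually_ne hne)).mono
          (fun y hy => ⟨hy.1, hy.2⟩)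
      obtain ⟨ε, hε, hball⟩ := Metric.eventually_nhds_iff.mp hev
      have hsubset : Metric.ball t₀ ε ⊆ {t : ℝ | ¬¬(0 < t ∧ f' t ≠ 0)} := by
        intro y hy
        simp only [Set.mem_setOf_eq, not_not]
        exact hball (Metric.mem_ball.mp hy)
      rw [ae_iff] at hae2
      have := measure_mono_null hsubset hae2
      exact absurd this (ne_of_gt (Metric.measure_ball_pos volume t₀ hε))
    have hfconst : ∀ x ∈ Set.Ioi (0:ℝ), f x = f 1 := by
      intro x hx
      have hx0 : (0:ℝ) < x := hx
      have hsub : Set.uIcc (1:ℝ) x ⊆ Set.Ioi 0 := by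
        intro y hy
        rw [Set.uIcc_eq_union] at hy
        rcases hy with hy | hy
        · exact lt_of_lt_of_le one_pos hy.1
        · exact lt_of_lt_of_le hx0 hy.1
      have hFTC := intervalIntegral.integral_eq_sub_of_hasDerivAt
        (fun y hy => hderiv y (hsub hy)) ((hf'cont.mono hsub).intervalIntegrable)
      have hz : (∫ t in (1:ℝ)..x, f' t) = 0 := by
        rw [intervalIntegral.integral_congr (g := fun _ => (0:ℝ))
          (fun y hy => hf'zero y (hsub hy))]
        simp
      rw [hz] at hFTC
      linarith [hFTC.symm]
    have hc0 : f 1 = 0 := by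
      have hev : (fun x : ℝ => x ^ (s - β) * f x) =ᶠ[atTop]
          (fun x : ℝ => x ^ (s - β) * f 1) := by
        filter_upwards [eventually_ge_atTop (1:ℝ)] with x hx
        rw [hfconst x (lt_of_lt_of_le one_pos hx)]
      have h2 : Tendsto (fun x : ℝ => x ^ (s - β) * f 1) atTop (nhds 0) :=
        hinfty.congr' hev
      rcases eq_or_lt_of_le hβs with heq | hlt
      · have h3 : Tendsto (fun _ : ℝ => f 1) atTop (nhds 0) := by
          apply h2.congr
          intro x
          rw [← heq, sub_self, Real.rpow_zero, one_mul]
        exact (tendsto_nhds_unique tendsto_const_nhds h3)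
      · have h3 : Tendsto (fun x : ℝ => x ^ (β - s)) atTop (nhds 0) := by
          have := tendsto_rpow_neg_atTop (y := s - β) (by linarith)
          simpa [neg_sub] using this
        have h4 := h2.mul h3
        rw [zero_mul] at h4
        have hev2 : (fun x : ℝ => (x ^ (s - β) * f 1) * x ^ (β - s)) =ᶠ[atTop]
            (fun _ : ℝ => f 1) := by
          filter_upwards [eventually_gt_atTop (0:ℝ)] with x hx
          rw [mul_comm (x ^ (s - β)) (f 1), mul_assoc, ← Real.rpow_add hx]
          simp
        have h5 : Tendsto (fun _ : ℝ => f 1) atTop (nhds 0) := h4.congr' hev2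
        exact tendsto_nhds_unique tendsto_const_nhds h5
    have hfzero : ∀ t ∈ Set.Ioi (0:ℝ), f t = 0 := by
      intro t ht; rw [hfconst t ht, hc0]
    have hrhs : (∫ t in Set.Ioi (0:ℝ), t ^ (s - β - 1) * f t) = 0 := by
      rw [MeasureTheory.setIntegral_congr_fun measurableSet_Ioi
        (g := fun _ => (0:ℝ)) (fun t ht => by rw [hfzero t ht, mul_zero])]
      simp
    have hlhs : (∫ x in Set.Ioi (0:ℝ),
        x ^ (s - 1) * ((1 / Real.Gamma (1 - β)) * ∫ t in (0:ℝ)..x, (x - t) ^ (-β) * f' t)) = 0 := by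
      rw [MeasureTheory.setIntegral_congr_fun measurableSet_Ioi
        (g := fun _ => (0:ℝ)) ?_]
      · simp
      · intro x hx
        dsimp only
        have hx0 : (0:ℝ) < x := hx
        have hI : (∫ t in (0:ℝ)..x, (x - t) ^ (-β) * f' t) = 0 := by
          rw [intervalIntegral.integral_congr_ae (g := fun _ => (0:ℝ))]
          · simp
          · apply Eventually.of_forall
            intro t ht
            rw [Set.uIoc_of_le hx0.le] at ht
            rw [hf'zero t ht.1, mul_zero]
        rw [hI, mul_zero, mul_zero]
    rw [hlhs, hrhs, mul_zero]
end

section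
/- Let 0 < β < 1, λ ∈ ℝ, and define y(t) = t^(β-1) E_{β,β}(λ t^β) for t > 0. Then for every x > 0: (i) (1/Γ(1-β)) ∫_0^x (x-t)^(-β) y(t) dt = Γ(1-β)⁻¹·Γ(1-β)·E_β(λ x^β) = E_β(λ x^β); and (ii) the function x ↦ (1/Γ(1-β)) ∫_0^x (x-t)^(-β) y(t) dt has derivative at x equal to λ y(x). That is, y satisfies the Riemann–Liouville fractional differential equation D^β y = λ y on (0,∞). -/
/-!
Expanding `E_{β,β}` termwise, the fractional integral of order `1 - β` of
`t^(β-1) (λ t^β)^k / Γ(βk + β)` is a Beta integral, equal to `Γ(1-β) (λ x^β)^k / Γ(βk + 1)`;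
summing over `k` gives (i). The interchange of sum and integral is justified by absolute
convergence, which rests on `Γ(x + α) / Γ(x) → ∞`. Part (ii) then follows from (i), which holds
on a neighbourhood of `x`, and the chain rule for `x ↦ E_β(λ x^β)`, using `E_β' = E_{β,β} / β`
obtained by termwise differentiation.
-/

open MeasureTheory Real

open Filter Set

theorem Real.Gamma_add_one_le_Gamma_add_mul_rpow {α x : ℝ} (hα0 : 0 < α) (hα1 : α < 1)
    (hx : 0 < x) : Gamma (x + 1) ≤ Gamma (x + α) * (x + α) ^ (1 - α) := by
  have hxα : 0 < x + α := by linarith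
  have hΓ := (Gamma_pos_of_pos hxα).le
  have h := Gamma_mul_add_mul_le_rpow_Gamma_mul_rpow_Gamma hxα (by linarith : 0 < x + α + 1)
    hα0 (by linarith : 0 < 1 - α) (add_sub_cancel α 1)
  rw [show α * (x + α) + (1 - α) * (x + α + 1) = x + 1 by ring, Gamma_add_one hxα.ne',
    mul_rpow hxα.le hΓ, mul_left_comm, ← rpow_add' hΓ (by norm_num), add_sub_cancel,
    rpow_one] at h
  exact h.trans_eq (mul_comm _ _)

theorem Real.tendsto_Gamma_add_div_Gamma_atTop {α : ℝ} (hα : 0 < α) :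
    Tendsto (fun x => Gamma (x + α) / Gamma x) atTop atTop := by
  rcases lt_or_ge α 1 with hα1 | hα1
  · -- log-convexity gives `Γ(x + α) / Γ(x) ≥ x (x + α)^(α - 1) ≥ (x + α)^α / 2`
    have hpow : Tendsto (fun x : ℝ => (x + α) ^ α / 2) atTop atTop :=
      ((tendsto_rpow_atTop hα).comp (tendsto_atTop_add_const_right _ α tendsto_id)).atTop_div_const
        two_pos
    refine tendsto_atTop_mono' _ ?_ hpow
    filter_upwards [eventually_ge_atTop α] with x hx
    have hx0 : 0 < x := hα.trans_le hx
    have hxα : 0 < x + α := by linarith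
    have hp : 0 < (x + α) ^ α := rpow_pos_of_pos hxα α
    have h := Gamma_add_one_le_Gamma_add_mul_rpow hα hα1 hx0
    rw [Gamma_add_one hx0.ne', rpow_sub hxα, rpow_one] at h
    rw [le_div_iff₀ (Gamma_pos_of_pos hx0)]
    rw [mul_div_assoc', le_div_iff₀ hp] at h
    nlinarith [Gamma_pos_of_pos hx0, Gamma_pos_of_pos hxα]
  · refine tendsto_atTop_mono' _ ?_ tendsto_id
    filter_upwards [eventually_ge_atTop 1] with x hx
    have hx0 : 0 < x := by linarith
    rw [id, le_div_iff₀ (Gamma_pos_of_pos hx0), ← Gamma_add_one hx0.ne']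
    exact Gamma_strictMonoOn_Ici.monotoneOn (by simp; linarith) (by simp; linarith)
      (by linarith)

theorem summable_pow_div_Gamma {α c : ℝ} (hα : 0 < α) (hc : 0 < c) (z : ℝ) :
    Summable fun k : ℕ => z ^ k / Gamma (α * k + c) := by
  have hΓ (k : ℕ) : 0 < Gamma (α * k + c) := Gamma_pos_of_pos (by positivity)
  have hlin : Tendsto (fun k : ℕ => α * k + c) atTop atTop :=
    tendsto_atTop_add_const_right _ c (tendsto_natCast_atTop_atTop.const_mul_atTop hα)
  refine summable_of_ratio_norm_eventually_le (r := 1 / 2) (by norm_num) ?_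
  filter_upwards [hlin.eventually
    ((tendsto_Gamma_add_div_Gamma_atTop hα).eventually_ge_atTop (2 * |z|))] with k hk
  rw [le_div_iff₀ (hΓ k)] at hk
  have hΓ' : 0 < Gamma (α * (k + 1 : ℕ) + c) := hΓ (k + 1)
  rw [norm_div, norm_div, norm_pow, norm_pow, norm_of_nonneg (hΓ k).le,
    norm_of_nonneg hΓ'.le, div_le_iff₀ hΓ', pow_succ]
  push_cast at hΓ' ⊢
  rw [show α * (k + 1) + c = α * k + c + α by ring] at hΓ' ⊢
  rw [norm_eq_abs]
  field_simp
  nlinarith [mul_le_mul_of_nonneg_left hk (pow_nonneg (abs_nonneg z) k)]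

theorem hasDerivAt_mittagLeffler_one {α : ℝ} (hα : 0 < α) (z : ℝ) :
    HasDerivAt (mittagLeffler α 1) (mittagLeffler α α z / α) z := by
  set g' : ℕ → ℝ → ℝ := fun k w => k * w ^ (k - 1) / Gamma (α * k + 1)
  -- `Γ(αk + 1) = αk Γ(αk)` absorbs the factor `k`
  have hg'_succ (j : ℕ) (w : ℝ) : g' (j + 1) w = w ^ j / Gamma (α * j + α) / α := by
    have hpos : 0 < α * j + α := by positivity
    simp only [g', Nat.add_sub_cancel]
    push_cast
    rw [show α * (j + 1) + 1 = (α * j + α) + 1 by ring, Gamma_add_one hpos.ne']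
    field_simp
  set R := |z| + 1
  have hu : Summable fun k => g' k R :=
    (summable_nat_add_iff 1).1 <|
      ((summable_pow_div_Gamma hα hα R).div_const α).congr fun j => (hg'_succ j R).symm
  have hbound (k : ℕ) (w : ℝ) (hw : w ∈ Ioo (z - 1) (z + 1)) : ‖g' k w‖ ≤ g' k R := by
    have hΓ : 0 < Gamma (α * k + 1) := Gamma_pos_of_pos (by positivity)
    have hwR : ‖w‖ ≤ R :=
      abs_le.2 ⟨by linarith [neg_abs_le z, hw.1], by linarith [le_abs_self z, hw.2]⟩
    simp only [g', norm_div, norm_mul, norm_pow, norm_of_nonneg hΓ.le, Real.norm_natCast]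
    gcongr
  have hz : z ∈ Ioo (z - 1) (z + 1) := ⟨by linarith, by linarith⟩
  have h := hasDerivAt_tsum_of_isPreconnected hu isOpen_Ioo isPreconnected_Ioo
    (fun k w _ => (hasDerivAt_pow k w).div_const _) hbound hz
    (summable_pow_div_Gamma hα one_pos z) hz
  have hsum : Summable fun k => g' k z := .of_norm_bounded hu fun k => hbound k z hz
  have hval : ∑' k, g' k z = mittagLeffler α α z / α := by
    rw [hsum.tsum_eq_zero_add, tsum_congr fun j => hg'_succ j z, tsum_div_const]
    simp [g', mittagLeffler]
  rwa [hval] at h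

theorem hasDerivAt_mittagLeffler_one_mul_rpow {β : ℝ} (hβ : 0 < β) (l : ℝ) {x : ℝ} (hx : 0 < x) :
    HasDerivAt (fun y => mittagLeffler β 1 (l * y ^ β))
      (l * (x ^ (β - 1) * mittagLeffler β β (l * x ^ β))) x := by
  refine ((hasDerivAt_mittagLeffler_one hβ (l * x ^ β)).comp x
    ((hasDerivAt_rpow_const (Or.inl hx.ne')).const_mul l)).congr_deriv ?_
  field_simp

theorem intervalIntegrable_rpow_mul_sub_rpow {a b x : ℝ} (ha : 0 < a) (hb : 0 < b) (hx : 0 < x) :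
    IntervalIntegrable (fun t => t ^ (a - 1) * (x - t) ^ (b - 1)) volume 0 x := by
  have hleft : IntervalIntegrable (fun t => t ^ (a - 1) * (x - t) ^ (b - 1)) volume 0 (x / 2) := by
    refine (intervalIntegral.intervalIntegrable_rpow' (by linarith)).mul_continuousOn ?_
    refine ContinuousOn.rpow_const (by fun_prop) fun t ht => Or.inl ?_
    rw [uIcc_of_le (by linarith)] at ht
    linarith [ht.2]
  have hright : IntervalIntegrable (fun t => t ^ (a - 1) * (x - t) ^ (b - 1)) volume (x / 2) x := by
    refine IntervalIntegrable.continuousOn_mul ?_ ?_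
    · have h := (intervalIntegral.intervalIntegrable_rpow' (r := b - 1) (by linarith)
        (a := x / 2) (b := 0)).comp_sub_left x
      rwa [sub_zero, sub_half] at h
    · refine ContinuousOn.rpow_const (by fun_prop) fun t ht => Or.inl ?_
      rw [uIcc_of_le (by linarith)] at ht
      linarith [ht.1]
  exact hleft.trans hright

theorem integral_rpow_mul_sub_rpow {a b x : ℝ} (ha : 0 < a) (hb : 0 < b) (hx : 0 < x) :
    ∫ t in (0 : ℝ)..x, t ^ (a - 1) * (x - t) ^ (b - 1)
      = Gamma a * Gamma b / Gamma (a + b) * x ^ (a + b - 1) := by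
  apply Complex.ofReal_injective
  rw [← intervalIntegral.integral_ofReal]
  calc ∫ t in (0 : ℝ)..x, ((t ^ (a - 1) * (x - t) ^ (b - 1) : ℝ) : ℂ)
      = ∫ t in (0 : ℝ)..x, (t : ℂ) ^ ((a : ℂ) - 1) * ((x : ℂ) - t) ^ ((b : ℂ) - 1) := by
        refine intervalIntegral.integral_congr fun t ht => ?_
        rw [uIcc_of_le hx.le] at ht
        simp only [Complex.ofReal_mul, Complex.ofReal_cpow ht.1,
          Complex.ofReal_cpow (sub_nonneg.2 ht.2)]
        push_cast
        ring_nf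
    _ = (x : ℂ) ^ ((a : ℂ) + b - 1) * Complex.betaIntegral a b := Complex.betaIntegral_scaled _ _ hx
    _ = _ := by
        rw [Complex.betaIntegral_eq_Gamma_mul_div _ _ (by simpa) (by simpa)]
        rw [← Complex.ofReal_add, Complex.Gamma_ofReal, Complex.Gamma_ofReal, Complex.Gamma_ofReal]
        push_cast [Complex.ofReal_cpow hx.le]
        ring

theorem MeasureTheory.integral_tsum_const_mul_of_nonneg {Ω : Type*} [MeasurableSpace Ω]
    {μ : Measure Ω} {c : ℕ → ℝ} {g : ℕ → Ω → ℝ} (hg_int : ∀ k, Integrable (g k) μ)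
    (hg_nonneg : ∀ k, 0 ≤ᵐ[μ] g k) (hsum : Summable fun k => |c k| * ∫ ω, g k ω ∂μ) :
    ∫ ω, ∑' k, c k * g k ω ∂μ = ∑' k, c k * ∫ ω, g k ω ∂μ := by
  have hnorm (k : ℕ) : ∫ ω, ‖c k * g k ω‖ ∂μ = |c k| * ∫ ω, g k ω ∂μ := by
    rw [← integral_const_mul]
    refine integral_congr_ae ?_
    filter_upwards [hg_nonneg k] with ω hω
    rw [norm_mul, norm_eq_abs, norm_of_nonneg hω]
  rw [← integral_tsum_of_summable_integral_norm (fun k => (hg_int k).const_mul (c k))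
    (hsum.congr fun k => (hnorm k).symm)]
  exact tsum_congr fun k => integral_const_mul _ _

theorem integral_sub_rpow_neg_mul_mittagLeffler {β : ℝ} (hβ0 : 0 < β) (hβ1 : β < 1) (l : ℝ)
    {x : ℝ} (hx : 0 < x) :
    ∫ t in (0 : ℝ)..x, (x - t) ^ (-β) * (t ^ (β - 1) * mittagLeffler β β (l * t ^ β))
      = Gamma (1 - β) * mittagLeffler β 1 (l * x ^ β) := by
  have hβ' : 0 < 1 - β := by linarith
  have hpos (k : ℕ) : 0 < β * k + β := by positivity
  set g : ℕ → ℝ → ℝ := fun k t => t ^ (β * k + β - 1) * (x - t) ^ (1 - β - 1)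
  have hexpand : EqOn (fun t => (x - t) ^ (-β) * (t ^ (β - 1) * mittagLeffler β β (l * t ^ β)))
      (fun t => ∑' k : ℕ, l ^ k / Gamma (β * k + β) * g k t) (Ioc 0 x) := by
    intro t ht
    simp only [mittagLeffler, g, ← tsum_mul_left]
    refine tsum_congr fun k => ?_
    rw [mul_pow, ← rpow_mul_natCast ht.1.le, sub_sub_cancel_left, add_sub_assoc,
      rpow_add ht.1]
    ring
  have hint (k : ℕ) : ∫ t in Ioc 0 x, g k t
      = Gamma (β * k + β) * Gamma (1 - β) / Gamma (β * k + 1) * x ^ (β * k) := by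
    rw [← intervalIntegral.integral_of_le hx.le, integral_rpow_mul_sub_rpow (hpos k) hβ' hx]
    ring_nf
  have hterm (a : ℝ) (k : ℕ) : a ^ k / Gamma (β * k + β) * ∫ t in Ioc 0 x, g k t
      = Gamma (1 - β) * ((a * x ^ β) ^ k / Gamma (β * k + 1)) := by
    rw [hint, mul_pow, ← rpow_mul_natCast hx.le]
    field_simp [(Gamma_pos_of_pos (hpos k)).ne']
  rw [intervalIntegral.integral_of_le hx.le, setIntegral_congr_fun measurableSet_Ioc hexpand,
    integral_tsum_const_mul_of_nonneg, tsum_congr (hterm l), tsum_mul_left, mittagLeffler]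
  · exact fun k => (intervalIntegrable_rpow_mul_sub_rpow (hpos k) hβ' hx).1
  · intro k
    filter_upwards [ae_restrict_mem measurableSet_Ioc] with t ht
    exact mul_nonneg (rpow_nonneg ht.1.le _) (rpow_nonneg (sub_nonneg.2 ht.2) _)
  · refine ((summable_pow_div_Gamma hβ0 one_pos (|l| * x ^ β)).mul_left (Gamma (1 - β))).congr
      fun k => ?_
    rw [abs_div, abs_pow, abs_of_pos (Gamma_pos_of_pos (hpos k)), hterm]

/-- `y(t) = t^(β-1) E_{β,β}(λ t^β)` solves the Riemann–Liouville fractional differential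
equation `D^β y = λ y` on `(0,∞)`: for every `x > 0`,
(i) the fractional integral of order `1-β` of `y` at `x` equals `E_β(λ x^β)`, and
(ii) its derivative at `x` equals `λ y(x)`. -/
theorem mittagLeffler_solves_rl_fde (β l : ℝ) (hβ0 : 0 < β) (hβ1 : β < 1) :
    ∀ x > (0:ℝ),
      ((1 / Real.Gamma (1 - β)) *
          ∫ t in (0:ℝ)..x, (x - t) ^ (-β) * (t ^ (β - 1) * mittagLeffler β β (l * t ^ β))
        = mittagLeffler β 1 (l * x ^ β)) ∧
      HasDerivAt
        (fun y : ℝ => (1 / Real.Gamma (1 - β)) *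
          ∫ t in (0:ℝ)..y, (y - t) ^ (-β) * (t ^ (β - 1) * mittagLeffler β β (l * t ^ β)))
        (l * (x ^ (β - 1) * mittagLeffler β β (l * x ^ β))) x := by
  have hΓ : Gamma (1 - β) ≠ 0 := (Gamma_pos_of_pos (by linarith)).ne'
  have hfrac (y : ℝ) (hy : 0 < y) : (1 / Gamma (1 - β)) *
      ∫ t in (0:ℝ)..y, (y - t) ^ (-β) * (t ^ (β - 1) * mittagLeffler β β (l * t ^ β))
        = mittagLeffler β 1 (l * y ^ β) := by
    rw [integral_sub_rpow_neg_mul_mittagLeffler hβ0 hβ1 l hy, one_div, inv_mul_cancel_left₀ hΓ]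
  intro x hx
  refine ⟨hfrac x hx, ?_⟩
  refine (hasDerivAt_mittagLeffler_one_mul_rpow hβ0 l hx).congr_of_eventuallyEq ?_
  filter_upwards [Ioi_mem_nhds hx] with y hy using hfrac y hy
end
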